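/- arXiv:2511.11095 — 4 statements merged into one kernel-verified Lean document; each statement's English description precedes it below -/
import Mathlib

section
/- Let h : O → O' be an injective map between object sets that fixes constants. For every state s over O and every ground action a(θ): a(θ) is applicable in s if and only if a(h ∘ θ) is applicable in h(s); and when applicable, succ(h(s), a(h ∘ θ)) = h(succ(s, a(θ))). (Progression commutes with injective constant-fixing renamings.) -/
/-- A (lifted) STRIPS domain: predicate symbols with arities, constants, and action schemata,
each schema with a set of parameter variables and precondition/add/delete sets of predicates
whose arguments are variables of the schema or constants. -/
structure StripsDomain where
  Pred : Type
  arity : Pred → ℕ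
  Const : Type
  Schema : Type
  Var : Schema → Type
  pre : (a : Schema) → Set ((p : Pred) × (Fin (arity p) → Var a ⊕ Const))
  add : (a : Schema) → Set ((p : Pred) × (Fin (arity p) → Var a ⊕ Const))
  del : (a : Schema) → Set ((p : Pred) × (Fin (arity p) → Var a ⊕ Const))

variable (D : StripsDomain)

/-- A ground atom over an object type `O`: a predicate applied to objects. -/
abbrev GAtom (O : Type*) : Type _ := (p : D.Pred) × (Fin (D.arity p) → O)

/-- A ground action over `O`: a schema together with an assignment of objects to its
parameter variables. -/
abbrev GAction (O : Type*) : Type _ := (a : D.Schema) × (D.Var a → O)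

/-- Instantiate a schema atom with the assignment `θ`, interpreting constants via `κ`. -/
def instAtom {O : Type*} (κ : D.Const → O) {a : D.Schema} (θ : D.Var a → O)
    (x : (p : D.Pred) × (Fin (D.arity p) → D.Var a ⊕ D.Const)) : GAtom D O :=
  ⟨x.1, fun i => Sum.elim θ κ (x.2 i)⟩

/-- Precondition set of atoms of a ground action. -/
def gpre {O : Type*} (κ : D.Const → O) (ga : GAction D O) : Set (GAtom D O) :=
  instAtom D κ ga.2 '' D.pre ga.1

/-- Add set of atoms of a ground action. -/
def gadd {O : Type*} (κ : D.Const → O) (ga : GAction D O) : Set (GAtom D O) :=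
  instAtom D κ ga.2 '' D.add ga.1

/-- Delete set of atoms of a ground action. -/
def gdel {O : Type*} (κ : D.Const → O) (ga : GAction D O) : Set (GAtom D O) :=
  instAtom D κ ga.2 '' D.del ga.1

/-- A ground action is applicable in a state `s` if its precondition set is contained in `s`. -/
def GApplicable {O : Type*} (κ : D.Const → O) (s : Set (GAtom D O)) (ga : GAction D O) : Prop :=
  gpre D κ ga ⊆ s

/-- Successor state of `s` under a ground action. -/
def gstep {O : Type*} (κ : D.Const → O) (s : Set (GAtom D O)) (ga : GAction D O) :
    Set (GAtom D O) :=
  (s \ gdel D κ ga) ∪ gadd D κ ga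

/-- A renaming `h : O → O'` acting pointwise on ground atoms. -/
def mapAtom {O O' : Type*} (h : O → O') (x : GAtom D O) : GAtom D O' :=
  ⟨x.1, h ∘ x.2⟩

/-- A renaming `h : O → O'` acting on ground actions: `a(θ) ↦ a(h ∘ θ)`. -/
def mapAction {O O' : Type*} (h : O → O') (ga : GAction D O) : GAction D O' :=
  ⟨ga.1, h ∘ ga.2⟩


lemma mapAtom_injective {O O' : Type*} (h : O → O') (hinj : Function.Injective h) :
    Function.Injective (mapAtom D h) := by
  rintro ⟨p, f⟩ ⟨q, g⟩ heq
  obtain ⟨rfl, hfg⟩ := Sigma.ext_iff.mp heq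
  exact Sigma.ext rfl (heq_of_eq (funext fun i => hinj (congrFun (eq_of_heq hfg) i)))

lemma instAtom_map {O O' : Type*} (κ : D.Const → O) (κ' : D.Const → O')
    (h : O → O') (hconst : ∀ c, h (κ c) = κ' c) {a : D.Schema} (θ : D.Var a → O)
    (x : (p : D.Pred) × (Fin (D.arity p) → D.Var a ⊕ D.Const)) :
    instAtom D κ' (h ∘ θ) x = mapAtom D h (instAtom D κ θ x) := by
  refine Sigma.ext rfl (heq_of_eq (funext fun i => ?_))
  show Sum.elim (h ∘ θ) κ' (x.2 i) = h (Sum.elim θ κ (x.2 i))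
  cases x.2 i with
  | inl v => rfl
  | inr c => exact (hconst c).symm

lemma image_inst {O O' : Type*} (κ : D.Const → O) (κ' : D.Const → O')
    (h : O → O') (hconst : ∀ c, h (κ c) = κ' c) {a : D.Schema} (θ : D.Var a → O)
    (T : Set ((p : D.Pred) × (Fin (D.arity p) → D.Var a ⊕ D.Const))) :
    instAtom D κ' (h ∘ θ) '' T = mapAtom D h '' (instAtom D κ θ '' T) := by
  rw [← Set.image_comp]
  exact Set.image_congr fun x _ => instAtom_map D κ κ' h hconst θ x

/-- Progression commutes with injective constant-fixing renamings: for an injective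
`h : O → O'` with `h ∘ κ = κ'` (i.e. `h` fixes constants), a ground action `a(θ)` is
applicable in `s` iff `a(h ∘ θ)` is applicable in `h(s)`, and when applicable,
`succ(h(s), a(h ∘ θ)) = h(succ(s, a(θ)))`. -/
theorem stmt5 {O O' : Type*} (κ : D.Const → O) (κ' : D.Const → O')
    (h : O → O') (hinj : Function.Injective h) (hconst : ∀ c, h (κ c) = κ' c)
    (s : Set (GAtom D O)) (ga : GAction D O) :
    (GApplicable D κ s ga ↔ GApplicable D κ' (mapAtom D h '' s) (mapAction D h ga)) ∧
    (GApplicable D κ s ga →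
      gstep D κ' (mapAtom D h '' s) (mapAction D h ga) = mapAtom D h '' gstep D κ s ga) := by
  have hgpre : gpre D κ' (mapAction D h ga) = mapAtom D h '' gpre D κ ga :=
    image_inst D κ κ' h hconst ga.2 _
  have hgadd : gadd D κ' (mapAction D h ga) = mapAtom D h '' gadd D κ ga :=
    image_inst D κ κ' h hconst ga.2 _
  have hgdel : gdel D κ' (mapAction D h ga) = mapAtom D h '' gdel D κ ga :=
    image_inst D κ κ' h hconst ga.2 _
  have hai := mapAtom_injective D h hinj
  constructor
  · unfold GApplicable
    rw [hgpre, Set.image_subset_image_iff hai]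
  · intro _
    unfold gstep
    rw [hgdel, hgadd, Set.image_union, Set.image_diff hai]
end

section
/- Let G = (V, E) be a finite directed graph and v_0 ∈ V. Define the ground STRIPS planning problem with atoms at(v), clear(v), visited(v) for v ∈ V; initial state s_0 = {at(v_0), visited(v_0)} ∪ {clear(v) : v ∈ V, v ≠ v_0}; for each edge (u, v) ∈ E a ground action move(u, v) with pre = {at(u), clear(v)}, add = {at(v), visited(v)}, del = {at(u), clear(v)}; and goal g = {visited(v) : v ∈ V}. Then this planning problem has a plan if and only if G has a Hamiltonian path starting at v_0 (a path visiting every vertex of G exactly once). -/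
/-- A ground STRIPS action: a triple of sets of atoms. -/
structure GAct (α : Type*) where
  pre : Set α
  add : Set α
  del : Set α

/-- The successor state of `s` under action `a` (when `a` is applicable, i.e. `a.pre ⊆ s`). -/
def gsucc {α : Type*} (s : Set α) (a : GAct α) : Set α :=
  (s \ a.del) ∪ a.add

/-- Final state after applying a sequence of actions. -/
def succList {α : Type*} : Set α → List (GAct α) → Set α
  | s, [] => s
  | s, a :: l => succList (gsucc s a) l

/-- The action sequence is applicable from `s`:
each action is applicable in the successively progressed state. -/
def AppList {α : Type*} : Set α → List (GAct α) → Prop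
  | _, [] => True
  | s, a :: l => a.pre ⊆ s ∧ AppList (gsucc s a) l

/-- Atoms of the Hamiltonian-path planning problem: `at(v)`, `clear(v)`, `visited(v)`. -/
inductive HAtom (V : Type*) where
  | atV (v : V)
  | clear (v : V)
  | visited (v : V)

/-- The ground action `move(u, v)` with `pre = {at(u), clear(v)}`,
`add = {at(v), visited(v)}`, `del = {at(u), clear(v)}`. -/
def move {V : Type*} (u v : V) : GAct (HAtom V) :=
  ⟨{HAtom.atV u, HAtom.clear v}, {HAtom.atV v, HAtom.visited v}, {HAtom.atV u, HAtom.clear v}⟩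

/-- The initial state `s₀ = {at(v₀), visited(v₀)} ∪ {clear(v) : v ≠ v₀}`. -/
def hamInit {V : Type*} (v₀ : V) : Set (HAtom V) :=
  {HAtom.atV v₀, HAtom.visited v₀} ∪ HAtom.clear '' {v | v ≠ v₀}

/-!
A state reachable by `move` actions is always of the form `hamState S cur`: the agent is at `cur`,
the vertices of `S` are visited and the others are clear. A `move(u, v)` is applicable in it
exactly when `u = cur` and `v ∉ S`, and leads to `hamState (insert v S) v`. Hence the plans made
of edge moves are exactly the walks `v₀ → v₁ → ⋯` along edges that never re-enter a vertex, and the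
goal says that the walk covers every vertex.
-/

namespace HAtom

variable {V : Type*}

def hamState (S : Set V) (cur : V) : Set (HAtom V) :=
  {atV cur} ∪ visited '' S ∪ clear '' Sᶜ

@[simp]
lemma atV_mem_hamState {S : Set V} {cur u : V} : atV u ∈ hamState S cur ↔ u = cur := by
  simp [hamState]

@[simp]
lemma clear_mem_hamState {S : Set V} {cur v : V} : clear v ∈ hamState S cur ↔ v ∉ S := by
  simp [hamState]

@[simp]
lemma visited_mem_hamState {S : Set V} {cur v : V} : visited v ∈ hamState S cur ↔ v ∈ S := by
  simp [hamState]

lemma hamInit_eq_hamState (v₀ : V) : hamInit v₀ = hamState {v₀} v₀ := by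
  ext x; cases x <;> simp [hamInit, eq_comm]

lemma gsucc_hamState_move (S : Set V) (cur v : V) :
    gsucc (hamState S cur) (move cur v) = hamState (insert v S) v := by
  ext x; cases x <;> simp [gsucc, move]; tauto

lemma move_pre_subset_hamState_iff {S : Set V} {cur u v : V} :
    (move u v).pre ⊆ hamState S cur ↔ u = cur ∧ v ∉ S := by
  simp [move, Set.insert_subset_iff]

end HAtom

section MovePlan

open HAtom

variable {V : Type*}

def movePlan : V → List V → List (GAct (HAtom V))
  | _, [] => []
  | cur, v :: vs => move cur v :: movePlan v vs

lemma exists_edge_of_mem_movePlan {E : V → V → Prop} {cur : V} {vs : List V}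
    (h : (cur :: vs).IsChain E) : ∀ a ∈ movePlan cur vs, ∃ u v, E u v ∧ a = move u v := by
  induction vs generalizing cur with
  | nil => simp [movePlan]
  | cons v vs ih =>
    obtain ⟨hE, htail⟩ := List.isChain_cons_cons.1 h
    simp only [movePlan, List.mem_cons, forall_eq_or_imp]
    exact ⟨⟨cur, v, hE, rfl⟩, ih htail⟩

lemma appList_movePlan_iff {S : Set V} {cur : V} {vs : List V} :
    AppList (hamState S cur) (movePlan cur vs) ↔ vs.Nodup ∧ ∀ v ∈ vs, v ∉ S := by
  induction vs generalizing S cur with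
  | nil => simp [movePlan, AppList]
  | cons v vs ih =>
    simp only [movePlan, AppList, move_pre_subset_hamState_iff, gsucc_hamState_move, ih,
      List.nodup_cons, List.mem_cons, forall_eq_or_imp, Set.mem_insert_iff, not_or, true_and]
    grind

lemma succList_movePlan (S : Set V) (cur : V) (vs : List V) :
    succList (hamState S cur) (movePlan cur vs) =
      hamState (S ∪ {v | v ∈ vs}) ((cur :: vs).getLast (List.cons_ne_nil _ _)) := by
  induction vs generalizing S cur with
  | nil => simp [movePlan, succList]
  | cons v vs ih =>
    rw [movePlan, succList, gsucc_hamState_move, ih, List.getLast_cons (List.cons_ne_nil _ _)]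
    congr 1
    ext w
    simp only [Set.mem_insert_iff, Set.mem_union, Set.mem_ofPred_eq, List.mem_cons]
    tauto

lemma exists_eq_movePlan {E : V → V → Prop} {S : Set V} {cur : V} {l : List (GAct (HAtom V))}
    (hmoves : ∀ a ∈ l, ∃ u v, E u v ∧ a = move u v) (happ : AppList (hamState S cur) l) :
    ∃ vs, (cur :: vs).IsChain E ∧ l = movePlan cur vs := by
  induction l generalizing S cur with
  | nil => exact ⟨[], .singleton cur, rfl⟩
  | cons a l ih =>
    obtain ⟨u, v, hE, rfl⟩ := hmoves a List.mem_cons_self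
    obtain ⟨hpre, happ⟩ := happ
    obtain rfl := (move_pre_subset_hamState_iff.1 hpre).1
    rw [gsucc_hamState_move] at happ
    obtain ⟨vs, hchain, rfl⟩ := ih (fun a ha => hmoves a (List.mem_cons_of_mem _ ha)) happ
    exact ⟨v :: vs, List.isChain_cons_cons.2 ⟨hE, hchain⟩, rfl⟩

lemma appList_movePlan_hamInit_iff {v₀ : V} {vs : List V} :
    AppList (hamInit v₀) (movePlan v₀ vs) ↔ (v₀ :: vs).Nodup := by
  rw [hamInit_eq_hamState, appList_movePlan_iff, List.nodup_cons]
  simp only [Set.mem_singleton_iff]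
  grind

lemma range_visited_subset_succList_movePlan_iff {v₀ : V} {vs : List V} :
    Set.range visited ⊆ succList (hamInit v₀) (movePlan v₀ vs) ↔ ∀ v, v ∈ v₀ :: vs := by
  simp [hamInit_eq_hamState, succList_movePlan, Set.range_subset_iff]

end MovePlan

theorem stmt10_general {V : Type*} (E : V → V → Prop) (v₀ : V) :
    (∃ l : List (GAct (HAtom V)),
        (∀ a ∈ l, ∃ u v, E u v ∧ a = move u v) ∧
        AppList (hamInit v₀) l ∧
        Set.range (HAtom.visited : V → HAtom V) ⊆ succList (hamInit v₀) l) ↔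
    (∃ vs : List V, (v₀ :: vs).Nodup ∧ (∀ v : V, v ∈ v₀ :: vs) ∧ List.Chain E v₀ vs) := by
  constructor
  · rintro ⟨l, hmoves, happ, hgoal⟩
    obtain ⟨vs, hchain, rfl⟩ := exists_eq_movePlan hmoves (HAtom.hamInit_eq_hamState v₀ ▸ happ)
    exact ⟨vs, appList_movePlan_hamInit_iff.1 happ,
      range_visited_subset_succList_movePlan_iff.1 hgoal, hchain⟩
  · rintro ⟨vs, hnodup, hcover, hchain⟩
    exact ⟨movePlan v₀ vs, exists_edge_of_mem_movePlan hchain,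
      appList_movePlan_hamInit_iff.2 hnodup, range_visited_subset_succList_movePlan_iff.2 hcover⟩

/-- The planning problem encoding of the Hamiltonian path problem: for a finite directed graph
`(V, E)` and start vertex `v₀`, there is a plan (a sequence of `move` actions along edges,
applicable from `s₀`, whose final state contains the goal `{visited(v) : v ∈ V}`) iff `G` has
a Hamiltonian path starting at `v₀` (a sequence of distinct vertices starting at `v₀`,
enumerating all of `V`, with consecutive vertices joined by edges). -/
theorem stmt10 {V : Type*} [Finite V] (E : V → V → Prop) (v₀ : V) :
    (∃ l : List (GAct (HAtom V)),
        (∀ a ∈ l, ∃ u v, E u v ∧ a = move u v) ∧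
        AppList (hamInit v₀) l ∧
        Set.range (HAtom.visited : V → HAtom V) ⊆ succList (hamInit v₀) l) ↔
    (∃ vs : List V, (v₀ :: vs).Nodup ∧ (∀ v : V, v ∈ v₀ :: vs) ∧ List.Chain E v₀ vs) :=
  stmt10_general E v₀
end

section
/- There exists a ground STRIPS planning problem with initial state s_0 and goal g = {g_1, g_2} consisting of two distinct atoms such that: (i) the problem is solvable and its optimal plan length is 3; (ii) for each ordering (x, y) of (g_1, g_2), there exists a plan from s_0 to a state containing x, every optimal such plan α has length 2, for every such α there exists a plan from succ(s_0, α) to a state containing y, every optimal such plan β has length 2, and every concatenation α followed by β is a valid plan for (s_0, g) of length 4. Hence the greedy goal-decomposition algorithm, which achieves the goal atoms one at a time by optimal subplans, always returns a plan of length 4 although the optimal plan length is 3. -/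
/-- `l` is a plan for `(s₀, g)` using actions from `A`. -/
def IsPlan {α : Type*} (A : Set (GAct α)) (s₀ g : Set α) (l : List (GAct α)) : Prop :=
  (∀ a ∈ l, a ∈ A) ∧ AppList s₀ l ∧ g ⊆ succList s₀ l

/-- `l` is an optimal plan for `(s₀, g)` using actions from `A`: no plan is shorter. -/
def OptPlan {α : Type*} (A : Set (GAct α)) (s₀ g : Set α) (l : List (GAct α)) : Prop :=
  IsPlan A s₀ g l ∧ ∀ l', IsPlan A s₀ g l' → l.length ≤ l'.length

/-! Each goal atom is reachable in two steps by producing a `token` and spending it, but spending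
consumes the token, while both goals together come from the last action of a three-step chain
`p → q → goals`. From any state containing none of `token`, `p`, `q`, the only plan of length at
most two reaching a missing goal atom is `makeToken, spend i`: the chain is too long. Hence each
greedy subplan is forced, its end state again contains none of those atoms, and the greedy plan
has length 4; and no plan of length at most two reaches both goals, as it would have to equal
both `makeToken, spend true` and `makeToken, spend false`. -/

section Plans

variable {α : Type*} {A : Set (GAct α)} {s g g' : Set α} {l m : List (GAct α)}

theorem succList_append (s : Set α) (l m : List (GAct α)) :
    succList s (l ++ m) = succList (succList s l) m := by
  induction l generalizing s with
  | nil => rfl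
  | cons a l ih => exact ih _

theorem appList_append (s : Set α) (l m : List (GAct α)) :
    AppList s (l ++ m) ↔ AppList s l ∧ AppList (succList s l) m := by
  induction l generalizing s with
  | nil => simp [AppList, succList]
  | cons a l ih => simp only [List.cons_append, AppList, succList, ih, and_assoc]

theorem IsPlan.append (hl : IsPlan A s g l) (hm : IsPlan A (succList s l) g' m) :
    IsPlan A s g' (l ++ m) :=
  ⟨List.forall_mem_append.2 ⟨hl.1, hm.1⟩, (appList_append s l m).2 ⟨hl.2.1, hm.2.1⟩,
    succList_append s l m ▸ hm.2.2⟩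

theorem OptPlan.length_le (hl : OptPlan A s g l) (hm : IsPlan A s g m) : l.length ≤ m.length :=
  hl.2 m hm

end Plans

namespace GreedyCounterexample

inductive Atom
  | token
  | p
  | q
  | goal (i : Bool)

open Atom

def makeToken : GAct Atom := ⟨∅, {token}, ∅⟩
def spend (i : Bool) : GAct Atom := ⟨{token}, {goal i}, {token}⟩
def chain₁ : GAct Atom := ⟨∅, {p}, ∅⟩
def chain₂ : GAct Atom := ⟨{p}, {q}, ∅⟩
def chain₃ : GAct Atom := ⟨{q}, {goal true, goal false}, ∅⟩

def actions : Set (GAct Atom) := {makeToken, spend true, spend false, chain₁, chain₂, chain₃}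

theorem mem_actions {a : GAct Atom} :
    a ∈ actions ↔ a = makeToken ∨ a = spend true ∨ a = spend false ∨ a = chain₁ ∨ a = chain₂ ∨
      a = chain₃ := Iff.rfl

theorem eq_makeToken_spend_of_isPlan {s : Set Atom} (hs : token ∉ s ∧ p ∉ s ∧ q ∉ s) {i : Bool}
    (hi : goal i ∉ s) {l : List (GAct Atom)} (hl : IsPlan actions s {goal i} l)
    (hlen : l.length ≤ 2) : l = [makeToken, spend i] := by
  obtain ⟨hA, happ, hgoal⟩ := hl
  rw [Set.singleton_subset_iff] at hgoal
  match l, hA with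
  | [], _ => exact absurd hgoal hi
  | [a], hA =>
    rcases mem_actions.1 (hA a (by simp)) with rfl | rfl | rfl | rfl | rfl | rfl <;> cases i <;>
      simp_all [AppList, succList, gsucc, makeToken, spend, chain₁, chain₂, chain₃]
  | [a, b], hA =>
    rcases mem_actions.1 (hA a (by simp)) with rfl | rfl | rfl | rfl | rfl | rfl <;>
      rcases mem_actions.1 (hA b (by simp)) with rfl | rfl | rfl | rfl | rfl | rfl <;> cases i <;>
      simp_all [AppList, succList, gsucc, makeToken, spend, chain₁, chain₂, chain₃]
  | _ :: _ :: _ :: _, _ => simp at hlen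

theorem succList_makeToken_spend {s : Set Atom} (hs : token ∉ s) (i : Bool) :
    succList s [makeToken, spend i] = insert (goal i) s := by
  ext x
  by_cases hx : x = token <;> simp_all [succList, gsucc, makeToken, spend]

theorem isPlan_makeToken_spend {s : Set Atom} (hs : token ∉ s) (i : Bool) :
    IsPlan actions s {goal i} [makeToken, spend i] := by
  refine ⟨?_, ?_, ?_⟩
  · cases i <;> simp [mem_actions]
  · simp [AppList, gsucc, makeToken, spend]
  · simp [succList_makeToken_spend hs]

theorem eq_makeToken_spend_of_optPlan {s : Set Atom} (hs : token ∉ s ∧ p ∉ s ∧ q ∉ s) {i : Bool}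
    (hi : goal i ∉ s) {l : List (GAct Atom)} (hl : OptPlan actions s {goal i} l) :
    l = [makeToken, spend i] :=
  eq_makeToken_spend_of_isPlan hs hi hl.1 (hl.length_le (isPlan_makeToken_spend hs.1 i))

theorem isPlan_chain : IsPlan actions ∅ {goal true, goal false} [chain₁, chain₂, chain₃] := by
  refine ⟨by simp [mem_actions], ?_, ?_⟩ <;>
    simp [AppList, succList, gsucc, chain₁, chain₂, chain₃]

theorem three_le_length_of_isPlan {l : List (GAct Atom)}
    (hl : IsPlan actions ∅ {goal true, goal false} l) : 3 ≤ l.length := by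
  by_contra! hlen
  have plan_for (i : Bool) : IsPlan actions ∅ {goal i} l :=
    ⟨hl.1, hl.2.1, (Set.singleton_subset_iff.2 (by cases i <;> simp)).trans hl.2.2⟩
  have h := (eq_makeToken_spend_of_isPlan (by simp) (by simp) (plan_for true) (by omega)).symm.trans
    (eq_makeToken_spend_of_isPlan (by simp) (by simp) (plan_for false) (by omega))
  simp [spend] at h

theorem greedy_subplans (i : Bool) :
    (∃ l, IsPlan actions ∅ {goal i} l) ∧
    ∀ l, OptPlan actions ∅ {goal i} l →
      l.length = 2 ∧
      (∃ m, IsPlan actions (succList ∅ l) {goal !i} m) ∧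
      ∀ m, OptPlan actions (succList ∅ l) {goal !i} m →
        m.length = 2 ∧ IsPlan actions ∅ {goal true, goal false} (l ++ m) ∧ (l ++ m).length = 4 := by
  have hmid : succList ∅ [makeToken, spend i] = {goal i} := by
    simp [succList_makeToken_spend]
  refine ⟨⟨_, isPlan_makeToken_spend (by simp) i⟩, fun l hl => ?_⟩
  obtain rfl := eq_makeToken_spend_of_optPlan (by simp) (by simp) hl
  refine ⟨rfl, ⟨_, isPlan_makeToken_spend (by simp [hmid]) !i⟩, fun m hm => ?_⟩
  obtain rfl := eq_makeToken_spend_of_optPlan (by simp [hmid]) (by cases i <;> simp [hmid]) hm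
  have hplan := (isPlan_makeToken_spend (s := ∅) (by simp) i).append
    (isPlan_makeToken_spend (by simp [hmid]) !i)
  refine ⟨rfl, ⟨hplan.1, hplan.2.1, ?_⟩, rfl⟩
  rw [succList_append, hmid, succList_makeToken_spend (by simp)]
  cases i <;> simp [Set.pair_comm]

end GreedyCounterexample

/-- There exists a ground STRIPS planning problem with two distinct goal atoms `g₁, g₂` such
that: (i) it is solvable with optimal plan length 3; and (ii) for each ordering `(x, y)` of the
two goal atoms, a plan achieving `x` exists, every optimal plan `α` achieving `x` from `s₀` has
length 2, from its end state a plan achieving `y` exists, every optimal such plan `β` has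
length 2, and every concatenation `α ++ β` is a valid plan for `(s₀, {g₁, g₂})` of length 4.
Hence the greedy goal-decomposition algorithm always returns a plan of length 4 although the
optimal plan length is 3. -/
theorem stmt11 :
    ∃ (α : Type) (A : Set (GAct α)) (s₀ : Set α) (g₁ g₂ : α),
      g₁ ≠ g₂ ∧
      s₀.Finite ∧ A.Finite ∧ (∀ a ∈ A, a.pre.Finite ∧ a.add.Finite ∧ a.del.Finite) ∧
      (∃ l, IsPlan A s₀ {g₁, g₂} l ∧ l.length = 3) ∧
      (∀ l, IsPlan A s₀ {g₁, g₂} l → 3 ≤ l.length) ∧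
      (∀ x y : α, ((x, y) = (g₁, g₂) ∨ (x, y) = (g₂, g₁)) →
        (∃ l, IsPlan A s₀ {x} l) ∧
        ∀ l, OptPlan A s₀ {x} l →
          l.length = 2 ∧
          (∃ m, IsPlan A (succList s₀ l) {y} m) ∧
          ∀ m, OptPlan A (succList s₀ l) {y} m →
            m.length = 2 ∧ IsPlan A s₀ {g₁, g₂} (l ++ m) ∧ (l ++ m).length = 4) := by
  open GreedyCounterexample Atom in
  refine ⟨Atom, actions, ∅, goal true, goal false, by simp, Set.finite_empty, by simp [actions],
    fun a ha => ?_, ⟨_, isPlan_chain, rfl⟩, fun l => three_le_length_of_isPlan, ?_⟩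
  · rcases mem_actions.1 ha with rfl | rfl | rfl | rfl | rfl | rfl <;>
      simp [makeToken, spend, chain₁, chain₂, chain₃]
  · rintro x y (h | h) <;> obtain ⟨rfl, rfl⟩ := Prod.mk.inj h
    exacts [greedy_subplans true, greedy_subplans false]
end

section
/- Let S be a set of states with a set A of actions, a partial successor function succ : S × A ⇀ S, and a set G ⊆ S of goal states; let d(s) denote the minimal number of actions in a plan from s (d(s) = 0 for s ∈ G, and d(s) = ∞ if no plan exists). Let π assign to each state s a subset π(s) of the actions applicable in s, and suppose that for every state s with 0 < d(s) < ∞ there exists a ∈ π(s) with d(succ(s, a)) = d(s) − 1. Then for every state s, the minimal length of a π-restricted plan from s equals d(s); in particular, pruning the applicable actions at every state to π preserves both solvability and optimal plan length. (Optimality-preserving state-space pruning by rules.) -/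
/-- `PlanFrom succ G s l`: the action sequence `l` is a plan from `s` in the transition system
with partial successor function `succ` and goal states `G`: each action is applicable in the
successively progressed state and the final state is a goal state. -/
inductive PlanFrom {S A : Type*} (succ : S → A → Option S) (G : Set S) : S → List A → Prop
  | nil {s : S} : s ∈ G → PlanFrom succ G s []
  | cons {s s' : S} {a : A} {l : List A} :
      succ s a = some s' → PlanFrom succ G s' l → PlanFrom succ G s (a :: l)

/-- `RPlanFrom succ G π s l`: `l` is a `π`-restricted plan from `s`, i.e. a plan in which each
action belongs to `π` of the state in which it is applied. -/
inductive RPlanFrom {S A : Type*} (succ : S → A → Option S) (G : Set S) (π : S → Set A) :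
    S → List A → Prop
  | nil {s : S} : s ∈ G → RPlanFrom succ G π s []
  | cons {s s' : S} {a : A} {l : List A} :
      a ∈ π s → succ s a = some s' → RPlanFrom succ G π s' l → RPlanFrom succ G π s (a :: l)

/-- The minimal length (in `ℕ∞`, with `⊤` when no plan exists) of a plan from `s` with respect
to the plan predicate `P`. -/
noncomputable def minLen {S A : Type*} (P : S → List A → Prop) (s : S) : ℕ∞ :=
  sInf {n : ℕ∞ | ∃ l, P s l ∧ (l.length : ℕ∞) = n}

/-!
Restricted plans are plans, so `π`-pruning can only increase the minimal plan length. Conversely,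
by induction on `n = d(s) < ∞`: the rule supplies `a ∈ π(s)` leading to a state `s'` with
`d(s') = n - 1`, which by induction has a `π`-restricted plan of length `n - 1`; prefixing `a`
gives one of length `n` from `s`.
-/

section minLen

variable {S A : Type*}

lemma minLen_le {P : S → List A → Prop} {s : S} {l : List A} (h : P s l) :
    minLen P s ≤ l.length :=
  sInf_le ⟨l, h, rfl⟩

lemma minLen_anti {P Q : S → List A → Prop} (hPQ : ∀ s l, P s l → Q s l) (s : S) :
    minLen Q s ≤ minLen P s :=
  sInf_le_sInf fun _ ⟨l, hl, hlen⟩ => ⟨l, hPQ s l hl, hlen⟩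

lemma exists_length_eq_of_minLen_eq {P : S → List A → Prop} {s : S} {n : ℕ}
    (h : minLen P s = n) : ∃ l, P s l ∧ l.length = n := by
  have hne : {m : ℕ∞ | ∃ l, P s l ∧ (l.length : ℕ∞) = m}.Nonempty := by
    by_contra hempty
    rw [Set.not_nonempty_iff_eq_empty] at hempty
    simp [minLen, hempty] at h
  obtain ⟨l, hl, hlen⟩ := csInf_mem hne
  exact ⟨l, hl, by rw [← minLen, h] at hlen; exact_mod_cast hlen⟩

end minLen

lemma RPlanFrom.planFrom {S A : Type*} {succ : S → A → Option S} {G : Set S} {π : S → Set A}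
    {s : S} {l : List A} (h : RPlanFrom succ G π s l) : PlanFrom succ G s l := by
  induction h with
  | nil hG => exact .nil hG
  | cons _ hsucc _ ih => exact .cons hsucc ih

lemma exists_rPlanFrom_length_eq_minLen {S A : Type*} {succ : S → A → Option S} {G : Set S}
    {π : S → Set A}
    (hπ : ∀ s : S, 0 < minLen (PlanFrom succ G) s → minLen (PlanFrom succ G) s < ⊤ →
      ∃ a ∈ π s, ∃ s', succ s a = some s' ∧
        minLen (PlanFrom succ G) s' + 1 = minLen (PlanFrom succ G) s)
    (n : ℕ) (s : S) (hs : minLen (PlanFrom succ G) s = n) :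
    ∃ l, RPlanFrom succ G π s l ∧ l.length = n := by
  induction n generalizing s with
  | zero =>
    obtain ⟨l, hl, hlen⟩ := exists_length_eq_of_minLen_eq hs
    rw [List.length_eq_zero_iff] at hlen
    subst hlen
    cases hl with
    | nil hG => exact ⟨[], .nil hG, rfl⟩
  | succ n ih =>
    obtain ⟨a, ha, s', hsucc, hd⟩ :=
      hπ s (by rw [hs]; exact_mod_cast n.succ_pos) (by rw [hs]; exact ENat.natCast_lt_top _)
    have hs' : minLen (PlanFrom succ G) s' = n := by
      rw [hs, ENat.natCast_add, ENat.natCast_one] at hd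
      exact WithTop.add_right_cancel ENat.one_ne_top hd
    obtain ⟨l, hl, hlen⟩ := ih s' hs'
    exact ⟨a :: l, .cons ha hsucc hl, by simp [hlen]⟩

theorem stmt13_general {S A : Type*} (succ : S → A → Option S) (G : Set S) (π : S → Set A)
    (hπ : ∀ s : S, 0 < minLen (PlanFrom succ G) s → minLen (PlanFrom succ G) s < ⊤ →
      ∃ a ∈ π s, ∃ s', succ s a = some s' ∧
        minLen (PlanFrom succ G) s' + 1 = minLen (PlanFrom succ G) s) :
    ∀ s : S, minLen (RPlanFrom succ G π) s = minLen (PlanFrom succ G) s := by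
  intro s
  refine le_antisymm ?_ (minLen_anti (fun _ _ => RPlanFrom.planFrom) s)
  cases hs : minLen (PlanFrom succ G) s using ENat.recTopCoe with
  | top => exact le_top
  | coe n =>
    obtain ⟨l, hl, rfl⟩ := exists_rPlanFrom_length_eq_minLen hπ n s hs
    exact minLen_le hl

/-- Optimality-preserving state-space pruning by rules: let `π` assign to each state a subset
of the actions applicable in it, and suppose that for every state `s` with `0 < d(s) < ∞`
there is `a ∈ π(s)` with `d(succ(s, a)) = d(s) − 1`, where `d` is the minimal plan length.
Then for every state `s` the minimal length of a `π`-restricted plan from `s` equals `d(s)`;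
in particular pruning the applicable actions to `π` preserves solvability and optimal plan
length. -/
theorem stmt13 {S A : Type*} (succ : S → A → Option S) (G : Set S) (π : S → Set A)
    (happ : ∀ s : S, ∀ a ∈ π s, ∃ s', succ s a = some s')
    (hπ : ∀ s : S, 0 < minLen (PlanFrom succ G) s → minLen (PlanFrom succ G) s < ⊤ →
      ∃ a ∈ π s, ∃ s', succ s a = some s' ∧
        minLen (PlanFrom succ G) s' + 1 = minLen (PlanFrom succ G) s) :
    ∀ s : S, minLen (RPlanFrom succ G π) s = minLen (PlanFrom succ G) s :=
  stmt13_general succ G π hπ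
end
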